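/- Let D be a cofibrantly generated model category with generating cofibrations I and generating trivial cofibrations J, and let C be a complete and cocomplete full coreflective subcategory of D satisfying: the unit η : X → GX is a natural isomorphism and every map in I and J is a morphism between objects of C. Write I_C-cell and J_C-cell for the relative I-cell and J-cell complexes whose maps lie in C, I_C-cof and J_C-cof for the maps of C with the left lifting property with respect to the I-injective (resp. J-injective) maps of C, I_C-inj and J_C-inj for the I-injective and J-injective maps of C, and W_C for the morphisms of C that are weak equivalences in D. Then: (i) every map in J_C-cell lies in W_C ∩ I_C-cof; (ii) I_C-inj ⊆ W_C ∩ J_C-inj; and (iii) W_C ∩ J_C-inj ⊆ I_C-inj (equivalently W_C ∩ I_C-cof ⊆ J_C-cof). -/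

import Mathlib

open CategoryTheory CategoryTheory.Limits

universe w v u

namespace Paper

variable {D : Type u} [Category.{v} D]

/-- `f` is a retract of `g` (in the arrow category). -/
def IsRetract {X Y X' Y' : D} (f : X ⟶ Y) (g : X' ⟶ Y') : Prop :=
  ∃ (i : Arrow.mk f ⟶ Arrow.mk g) (r : Arrow.mk g ⟶ Arrow.mk f), i ≫ r = 𝟙 _

/-- The class of maps with the left lifting property with respect to `T`. -/
def llp (T : MorphismProperty D) : MorphismProperty D :=
  fun _ _ f => ∀ ⦃X Y : D⦄ (p : X ⟶ Y), T p → HasLiftingProperty f p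

/-- The class of `T`-injective maps, i.e. maps with the right lifting property
with respect to `T`. -/
def rlp (T : MorphismProperty D) : MorphismProperty D :=
  fun _ _ p => ∀ ⦃A B : D⦄ (f : A ⟶ B), T f → HasLiftingProperty f p

/-- `g` is a pushout of some map of `I`. -/
def pushouts (I : MorphismProperty D) : MorphismProperty D :=
  fun X Y g => ∃ (A B : D) (f : A ⟶ B) (u : A ⟶ X) (v : B ⟶ Y),
    I f ∧ IsPushout u f g v

section Sequences

variable {J : Type w} [Preorder J]

/-- The restriction of `F : J ⥤ D` to `{j | j < i}`. -/
def restrictLT (F : J ⥤ D) (i : J) : Set.Iio i ⥤ D :=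
  (Subtype.mono_coe _).functor ⋙ F

/-- The cocone over the restriction of `F` to `{j | j < i}` whose point is `F.obj i`. -/
def coconeLT (F : J ⥤ D) (i : J) : Cocone (restrictLT F i) where
  pt := F.obj i
  ι :=
    { app := fun k => F.map (homOfLE k.2.le)
      naturality := fun k l φ => by
        dsimp [restrictLT]
        erw [← F.map_comp, Category.comp_id]
        rfl }

/-- A functor `F` indexed by a well-ordered set is a sequence of maps of `K`:
each successor step belongs to `K`, and `F` is continuous at limit elements. -/
structure IsSequenceIn (K : MorphismProperty D) [SuccOrder J] (F : J ⥤ D) : Prop where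
  succ_mem : ∀ i : J, ¬ IsMax i → K (F.map (homOfLE (Order.le_succ i)))
  smooth : ∀ i : J, Order.IsSuccLimit i → Nonempty (IsColimit (coconeLT F i))

end Sequences

/-- The data exhibiting `f` as a transfinite composition of maps of `K`:
a sequence of maps of `K` indexed by a well-ordered set, starting at the domain of `f`,
whose colimit is the codomain of `f`. -/
structure TransfiniteCompositionData (K : MorphismProperty D) {X Y : D} (f : X ⟶ Y) where
  J : Type v
  [instLinearOrder : LinearOrder J]
  [instOrderBot : OrderBot J]
  [instSuccOrder : SuccOrder J]
  [instWellFoundedLT : WellFoundedLT J]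
  F : J ⥤ D
  seq : IsSequenceIn K F
  isoBot : F.obj ⊥ ≅ X
  c : Cocone F
  isColimit : IsColimit c
  isoTop : c.pt ≅ Y
  fac : f = isoBot.inv ≫ c.ι.app ⊥ ≫ isoTop.hom

/-- The class of transfinite compositions of pushouts of maps of `I`; this is the class
of relative `I`-cell complexes (`I`-cell). -/
def cell (I : MorphismProperty D) : MorphismProperty D :=
  fun _ _ f => Nonempty (TransfiniteCompositionData (pushouts I) f)

/-- The canonical map `colim Hom(A, F -) ⟶ Hom(A, c.pt)` is bijective: every map
`A ⟶ c.pt` factors through some stage, and two maps to a stage which become equal in the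
colimit are identified at some later stage. -/
def HomColimCommutes (A : D) {J : Type w} [Preorder J] (F : J ⥤ D) (c : Cocone F) : Prop :=
  (∀ g : A ⟶ c.pt, ∃ (j : J) (h : A ⟶ F.obj j), h ≫ c.ι.app j = g) ∧
  (∀ (j : J) (h₁ h₂ : A ⟶ F.obj j), h₁ ≫ c.ι.app j = h₂ ≫ c.ι.app j →
     ∃ (j' : J) (k : j ⟶ j'), h₁ ≫ F.map k = h₂ ≫ F.map k)

/-- `A` is `κ`-small relative to `K` (Hovey 2.1.3): for every `κ`-filtered well-ordered
set `J` and every `J`-indexed sequence of maps of `K`, the functor `Hom(A, -)` commutes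
with the colimit of the sequence. -/
def IsSmallRelTo (A : D) (K : MorphismProperty D) (κ : Cardinal.{v}) : Prop :=
  ∀ (J : Type v) [LinearOrder J] [OrderBot J] [SuccOrder J] [WellFoundedLT J] [NoMaxOrder J],
    (∀ s : Set J, Cardinal.mk s ≤ κ → BddAbove s) →
    ∀ (F : J ⥤ D), IsSequenceIn K F →
      ∀ (c : Cocone F), IsColimit c → HomColimCommutes A F c

/-- `A` is small relative to `K` if it is `κ`-small relative to `K`
for some regular cardinal `κ`. -/
def IsSmallRel (A : D) (K : MorphismProperty D) : Prop :=
  ∃ κ : Cardinal.{v}, κ.IsRegular ∧ IsSmallRelTo A K κ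

/-- `A` is finite relative to `K` (Hovey 2.1.4): `Hom(A, -)` commutes with colimits of
arbitrary `K`-sequences indexed by limit-type well-ordered sets. -/
def IsFiniteRel (A : D) (K : MorphismProperty D) : Prop :=
  ∀ (J : Type v) [LinearOrder J] [OrderBot J] [SuccOrder J] [WellFoundedLT J] [NoMaxOrder J],
    ∀ (F : J ⥤ D), IsSequenceIn K F →
      ∀ (c : Cocone F), IsColimit c → HomColimCommutes A F c

/-- A model structure on a category `D` (Hovey 1.1.3, without the functoriality
of the factorizations): classes of weak equivalences, fibrations and cofibrations
satisfying the two-out-of-three, retract, lifting and factorization axioms. -/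
structure ModelStructure (D : Type u) [Category.{v} D] where
  W : MorphismProperty D
  Fib : MorphismProperty D
  Cof : MorphismProperty D
  w_comp : ∀ {X Y Z : D} (f : X ⟶ Y) (g : Y ⟶ Z), W f → W g → W (f ≫ g)
  w_cancel_left : ∀ {X Y Z : D} (f : X ⟶ Y) (g : Y ⟶ Z), W f → W (f ≫ g) → W g
  w_cancel_right : ∀ {X Y Z : D} (f : X ⟶ Y) (g : Y ⟶ Z), W g → W (f ≫ g) → W f
  w_retract : ∀ {X Y X' Y' : D} (f : X ⟶ Y) (g : X' ⟶ Y'), IsRetract f g → W g → W f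
  fib_retract : ∀ {X Y X' Y' : D} (f : X ⟶ Y) (g : X' ⟶ Y'), IsRetract f g → Fib g → Fib f
  cof_retract : ∀ {X Y X' Y' : D} (f : X ⟶ Y) (g : X' ⟶ Y'), IsRetract f g → Cof g → Cof f
  lift_cof_trivFib : ∀ {A B X Y : D} (i : A ⟶ B) (p : X ⟶ Y),
    Cof i → Fib p → W p → HasLiftingProperty i p
  lift_trivCof_fib : ∀ {A B X Y : D} (i : A ⟶ B) (p : X ⟶ Y),
    Cof i → W i → Fib p → HasLiftingProperty i p
  fact_cof_trivFib : ∀ {X Y : D} (f : X ⟶ Y),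
    ∃ (Z : D) (i : X ⟶ Z) (p : Z ⟶ Y), Cof i ∧ Fib p ∧ W p ∧ i ≫ p = f
  fact_trivCof_fib : ∀ {X Y : D} (f : X ⟶ Y),
    ∃ (Z : D) (i : X ⟶ Z) (p : Z ⟶ Y), Cof i ∧ W i ∧ Fib p ∧ i ≫ p = f

/-- A model structure is cofibrantly generated by sets `I` and `J` (Hovey 2.1.17) if the
domains of `I` (resp. `J`) are small relative to relative `I`-cell (resp. `J`-cell)
complexes, the fibrations are the `J`-injective maps and the trivial fibrations are the
`I`-injective maps. -/
structure CofibrantlyGenerated (M : ModelStructure D) (I J : MorphismProperty D) : Prop where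
  small_I : ∀ {A B : D} (f : A ⟶ B), I f → IsSmallRel A (cell I)
  small_J : ∀ {A B : D} (f : A ⟶ B), J f → IsSmallRel A (cell J)
  fib_eq : ∀ {X Y : D} (p : X ⟶ Y), M.Fib p ↔ rlp J p
  trivFib_eq : ∀ {X Y : D} (p : X ⟶ Y), (M.Fib p ∧ M.W p) ↔ rlp I p

/-- A cofibrantly generated model structure is finitely generated (Hovey 2.1.17) if
moreover the domains and codomains of `I` and `J` are finite relative to `I`-cell. -/
structure FinitelyGenerated (M : ModelStructure D) (I J : MorphismProperty D) extends
    CofibrantlyGenerated M I J : Prop where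
  finite_I : ∀ {A B : D} (f : A ⟶ B), I f → IsFiniteRel A (cell I) ∧ IsFiniteRel B (cell I)
  finite_J : ∀ {A B : D} (f : A ⟶ B), J f → IsFiniteRel A (cell I) ∧ IsFiniteRel B (cell I)

section Quillen

variable {C : Type u} [Category.{v} C]

/-- An adjunction `F ⊣ G` is a Quillen adjunction (Hovey 1.3.1) if the left adjoint `F`
preserves cofibrations and trivial cofibrations. -/
def IsQuillenAdjunction (MC : ModelStructure C) (MD : ModelStructure D)
    (F : C ⥤ D) (G : D ⥤ C) (_ : F ⊣ G) : Prop :=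
  (∀ {A B : C} (f : A ⟶ B), MC.Cof f → MD.Cof (F.map f)) ∧
  (∀ {A B : C} (f : A ⟶ B), MC.Cof f → MC.W f → MD.Cof (F.map f) ∧ MD.W (F.map f))

/-- An object is cofibrant if the map from the initial object to it is a cofibration. -/
def Cofibrant (M : ModelStructure D) [HasInitial D] (X : D) : Prop :=
  M.Cof (initial.to X)

/-- An object is fibrant if the map from it to the terminal object is a fibration. -/
def Fibrant (M : ModelStructure D) [HasTerminal D] (X : D) : Prop :=
  M.Fib (terminal.from X)

/-- A Quillen adjunction `F ⊣ G` is a Quillen equivalence (Hovey 1.3.12) if for every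
cofibrant `X` and fibrant `Y`, a map `F X ⟶ Y` is a weak equivalence if and only if its
adjoint `X ⟶ G Y` is one. -/
def IsQuillenEquivalence (MC : ModelStructure C) (MD : ModelStructure D)
    [HasInitial C] [HasTerminal D]
    (F : C ⥤ D) (G : D ⥤ C) (adj : F ⊣ G) : Prop :=
  IsQuillenAdjunction MC MD F G adj ∧
  ∀ (X : C) (Y : D), Cofibrant MC X → Fibrant MD Y →
    ∀ f : F.obj X ⟶ Y, (MD.W f ↔ MC.W (adj.homEquiv X Y f))

end Quillen

/-- The restriction of a class of maps of `D` to a full subcategory. -/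
def restrict (P : D → Prop) (K : MorphismProperty D) : MorphismProperty (ObjectProperty.FullSubcategory P) :=
  fun _ _ f => K ((ObjectProperty.ι P).map f)


/-!
The inclusion `ι` of `C` is a fully faithful left adjoint. Being fully faithful, it identifies
lifting problems in `C` with lifting problems in `D`; as `I` and `J` live in `C`, a map of `C` is
`I_C`- (resp. `J_C`-)injective exactly when it is `I`- (resp. `J`-)injective in `D`, and (ii),
(iii) become the descriptions of trivial fibrations and fibrations of `D`. Being a left adjoint,
`ι` sends a `J_C`-cell complex to a `J`-cell complex of `D`, which lifts against all fibrations
and is therefore a weak equivalence by the retract argument. Finally `J_C`-cell complexes lift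
against `J_C`-injective maps, and these include the `I_C`-injective maps by (ii).
-/

theorem _root_.CategoryTheory.Functor.FullyFaithful.hasLiftingProperty_map_iff
    {C : Type*} [Category* C] {E : Type*} [Category* E] {F : C ⥤ E} (hF : F.FullyFaithful)
    {A B X Y : C} (i : A ⟶ B) (p : X ⟶ Y) :
    HasLiftingProperty (F.map i) (F.map p) ↔ HasLiftingProperty i p := by
  constructor
  · intro _
    refine ⟨fun {t b} sq =>
      ⟨⟨{ l := hF.preimage (sq.map F).lift, fac_left := ?_, fac_right := ?_ }⟩⟩⟩
    · exact hF.map_injective (by simp)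
    · exact hF.map_injective (by simp)
  · intro _
    refine ⟨fun {t b} sq => ?_⟩
    have sq' : CommSq (hF.preimage t) i p (hF.preimage b) :=
      ⟨hF.map_injective (by simpa using sq.w)⟩
    exact ⟨⟨{ l := F.map sq'.lift
              fac_left := by rw [← F.map_comp, sq'.fac_left, hF.map_preimage]
              fac_right := by rw [← F.map_comp, sq'.fac_right, hF.map_preimage] }⟩⟩

section Lifting

variable {C : Type u} [Category.{v} C]

theorem IsSequenceIn.isWellOrderContinuous {J : Type w} [LinearOrder J] [SuccOrder J]
    {K : MorphismProperty C} {F : J ⥤ C} (hF : IsSequenceIn K F) : F.IsWellOrderContinuous :=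
  ⟨hF.smooth⟩

theorem TransfiniteCompositionData.llp {K T : MorphismProperty C} {X Y : C} {f : X ⟶ Y}
    (d : TransfiniteCompositionData K f) (hK : K ≤ T.llp) : T.llp f := by
  let := d.instLinearOrder
  let := d.instOrderBot
  let := d.instSuccOrder
  have := d.instWellFoundedLT
  have := d.seq.isWellOrderContinuous
  intro Z W p hp
  have : HasLiftingProperty (d.c.ι.app ⊥) p :=
    HasLiftingProperty.transfiniteComposition.hasLiftingProperty_ι_app_bot d.isColimit
      fun j hj => hK _ (d.seq.succ_mem j hj) p hp
  rw [d.fac]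
  infer_instance

theorem pushouts_le_pushouts (K : MorphismProperty C) : pushouts K ≤ K.pushouts :=
  fun _ _ _ ⟨A, B, f, u, v, hf, h⟩ => ⟨A, B, f, u, v, hf, h⟩

theorem cell_le_llp_rlp (K : MorphismProperty C) : cell K ≤ K.rlp.llp :=
  fun _ _ _ ⟨d⟩ => d.llp ((pushouts_le_pushouts K).trans K.pushouts_le_llp_rlp)

theorem rlp_restrict_iff {P : C → Prop} {K : MorphismProperty C}
    (hK : ∀ {A B : C} (g : A ⟶ B), K g → P A ∧ P B)
    {X Y : ObjectProperty.FullSubcategory P} (f : X ⟶ Y) :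
    rlp (restrict P K) f ↔ rlp K ((ObjectProperty.ι P).map f) := by
  have hι := ObjectProperty.fullyFaithfulι P
  constructor
  · intro h A B g hg
    obtain ⟨hA, hB⟩ := hK g hg
    let g' : (⟨A, hA⟩ : ObjectProperty.FullSubcategory P) ⟶ ⟨B, hB⟩ := ObjectProperty.homMk g
    exact (hι.hasLiftingProperty_map_iff g' f).2 (h g' hg)
  · exact fun h A B g hg => (hι.hasLiftingProperty_map_iff g f).1 (h _ hg)

end Lifting

section Map

variable {C : Type u} [Category.{v} C] {E : Type*} [Category.{v} E] (L : C ⥤ E)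

theorem pushouts_inverseImage_le [PreservesColimitsOfShape WalkingSpan L]
    (K : MorphismProperty E) : pushouts (K.inverseImage L) ≤ (pushouts K).inverseImage L :=
  fun _ _ _ ⟨_, _, f, u, v, hf, h⟩ => ⟨_, _, L.map f, L.map u, L.map v, hf, h.map L⟩

theorem IsSequenceIn.map {J : Type w} [LinearOrder J] [SuccOrder J]
    [PreservesColimitsOfSize.{w, w} L] {K' : MorphismProperty C} {K : MorphismProperty E}
    (hK : K' ≤ K.inverseImage L) {F : J ⥤ C} (hF : IsSequenceIn K' F) :
    IsSequenceIn K (F ⋙ L) where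
  succ_mem i hi := hK _ (hF.succ_mem i hi)
  smooth i hi := by
    obtain ⟨hc⟩ := hF.smooth i hi
    exact ⟨(isColimitOfPreserves L hc).ofIsoColimit
      (Cocone.ext (Iso.refl _) fun _ => Category.comp_id _)⟩

noncomputable def TransfiniteCompositionData.map [PreservesColimitsOfSize.{v, v} L]
    {K' : MorphismProperty C} {K : MorphismProperty E} (hK : K' ≤ K.inverseImage L)
    {X Y : C} {f : X ⟶ Y} (d : TransfiniteCompositionData K' f) :
    TransfiniteCompositionData K (L.map f) :=
  let := d.instLinearOrder
  let := d.instSuccOrder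
  { J := d.J
    instOrderBot := d.instOrderBot
    instWellFoundedLT := d.instWellFoundedLT
    F := d.F ⋙ L
    seq := d.seq.map L hK
    isoBot := L.mapIso d.isoBot
    c := L.mapCocone d.c
    isColimit := isColimitOfPreserves L d.isColimit
    isoTop := L.mapIso d.isoTop
    fac := by simp [d.fac] }

theorem cell_inverseImage_le [PreservesColimitsOfSize.{v, v} L] (K : MorphismProperty E) :
    cell (K.inverseImage L) ≤ (cell K).inverseImage L :=
  fun _ _ _ ⟨d⟩ => ⟨d.map L (pushouts_inverseImage_le L K)⟩

end Map

section Model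

variable {C : Type u} [Category.{v} C]

theorem isRetract_of_fac_of_hasLiftingProperty {X Y Z : C} {f : X ⟶ Y} {i : X ⟶ Z}
    {q : Z ⟶ Y} (fac : i ≫ q = f) [HasLiftingProperty f q] : IsRetract f i := by
  have sq : CommSq i f q (𝟙 Y) := ⟨by rw [Category.comp_id, fac]⟩
  exact ⟨Arrow.homMk (𝟙 X) sq.lift (by simp), Arrow.homMk (𝟙 X) q (by simp [fac]),
    by ext <;> simp⟩

theorem ModelStructure.w_of_llp_fib (M : ModelStructure C) {X Y : C} {f : X ⟶ Y}
    (hf : M.Fib.llp f) : M.W f := by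
  obtain ⟨Z, i, q, -, hi, hq, fac⟩ := M.fact_trivCof_fib f
  have := hf q hq
  exact M.w_retract f i (isRetract_of_fac_of_hasLiftingProperty fac) hi

theorem CofibrantlyGenerated.w_of_cell {M : ModelStructure C} {I J : MorphismProperty C}
    (hCG : CofibrantlyGenerated M I J) {X Y : C} {f : X ⟶ Y} (hf : cell J f) : M.W f :=
  M.w_of_llp_fib fun _ _ q hq => cell_le_llp_rlp J _ hf q ((hCG.fib_eq q).1 hq)

end Model

theorem recognition_inclusions_in_coreflective_subcategory_general
    {D : Type u} [Category.{v} D]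
    (M : ModelStructure D) (I J : MorphismProperty D)
    (hCG : CofibrantlyGenerated M I J)
    (P : D → Prop)
    (G : D ⥤ ObjectProperty.FullSubcategory P) (adj : ObjectProperty.ι P ⊣ G)
    (hI : ∀ {A B : D} (f : A ⟶ B), I f → P A ∧ P B)
    (hJ : ∀ {A B : D} (f : A ⟶ B), J f → P A ∧ P B) :
    (∀ {X Y : ObjectProperty.FullSubcategory P} (f : X ⟶ Y), cell (restrict P J) f →
      restrict P M.W f ∧ llp (rlp (restrict P I)) f) ∧
    (∀ {X Y : ObjectProperty.FullSubcategory P} (f : X ⟶ Y), rlp (restrict P I) f →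
      restrict P M.W f ∧ rlp (restrict P J) f) ∧
    (∀ {X Y : ObjectProperty.FullSubcategory P} (f : X ⟶ Y), restrict P M.W f → rlp (restrict P J) f →
      rlp (restrict P I) f) := by
  have : PreservesColimitsOfSize.{v, v} (ObjectProperty.ι P) :=
    adj.leftAdjoint_preservesColimits
  have inj_I : ∀ {X Y : ObjectProperty.FullSubcategory P} (f : X ⟶ Y),
      rlp (restrict P I) f → restrict P M.W f ∧ rlp (restrict P J) f := by
    intro X Y f hf
    obtain ⟨hFib, hW⟩ := (hCG.trivFib_eq _).2 ((rlp_restrict_iff hI f).1 hf)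
    exact ⟨hW, (rlp_restrict_iff hJ f).2 ((hCG.fib_eq _).1 hFib)⟩
  refine ⟨fun f hf => ⟨hCG.w_of_cell (cell_inverseImage_le _ J f hf), ?_⟩, inj_I,
    fun f hW hf => ?_⟩
  · exact fun _ _ q hq => cell_le_llp_rlp _ f hf q (inj_I q hq).2
  · have hFib := (hCG.fib_eq _).2 ((rlp_restrict_iff hJ f).1 hf)
    exact (rlp_restrict_iff hI f).2 ((hCG.trivFib_eq _).1 ⟨hFib, hW⟩)

/-- Under the hypotheses of Statement 0, with `W_C` the morphisms of the
coreflective subcategory `C` that are weak equivalences in `D`, the three inclusions of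
Hovey's recognition theorem hold in `C`:
(i) relative `J`-cell complexes in `C` are in `W_C` and are `I`-cofibrations in `C`;
(ii) `I`-injective maps of `C` are in `W_C` and are `J`-injective;
(iii) maps of `C` which are weak equivalences and `J`-injective are `I`-injective. -/
theorem recognition_inclusions_in_coreflective_subcategory
    {D : Type u} [Category.{v} D] [HasLimits D] [HasColimits D]
    (M : ModelStructure D) (I J : MorphismProperty D)
    (hCG : CofibrantlyGenerated M I J)
    (P : D → Prop) [HasLimits (ObjectProperty.FullSubcategory P)] [HasColimits (ObjectProperty.FullSubcategory P)]
    (G : D ⥤ ObjectProperty.FullSubcategory P) (adj : ObjectProperty.ι P ⊣ G)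
    (hunit : IsIso adj.unit)
    (hI : ∀ {A B : D} (f : A ⟶ B), I f → P A ∧ P B)
    (hJ : ∀ {A B : D} (f : A ⟶ B), J f → P A ∧ P B) :
    (∀ {X Y : ObjectProperty.FullSubcategory P} (f : X ⟶ Y), cell (restrict P J) f →
      restrict P M.W f ∧ llp (rlp (restrict P I)) f) ∧
    (∀ {X Y : ObjectProperty.FullSubcategory P} (f : X ⟶ Y), rlp (restrict P I) f →
      restrict P M.W f ∧ rlp (restrict P J) f) ∧
    (∀ {X Y : ObjectProperty.FullSubcategory P} (f : X ⟶ Y), restrict P M.W f → rlp (restrict P J) f →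
      rlp (restrict P I) f) :=
  recognition_inclusions_in_coreflective_subcategory_general M I J hCG P G adj hI hJ

end Paper
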